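/- arXiv:2501.15821 — 3 statements merged into one kernel-verified Lean document; each statement's English description precedes it below -/
import Mathlib

section
/- Let F be a free group, R₀ ⊆ F, r, r' ∈ F, and set G = F/⟪R₀ ∪ {r}⟫ and G' = F/⟪R₀ ∪ {r'}⟫. Suppose r' maps into [G,G] under F → G, r maps into [G',G'] under F → G', and the abelianizations of G and G' are isomorphic. Then the Ma-Qiu indices satisfy |a(G) − a(G')| ≤ 1 (whenever both are finite). -/
open Subgroup QuotientGroup

private lemma maqiu_map_commutator {G H : Type*} [Group G] [Group H] (f : G →* H)
    (hf : Function.Surjective f) : Subgroup.map f (commutator G) = commutator H := by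
  rw [commutator_def, Subgroup.map_commutator, Subgroup.map_top_of_surjective f hf,
    commutator_def]

private lemma maqiu_aux {α : Type*} (R₀ : Set (FreeGroup α)) (r r' : FreeGroup α) (a' : ℕ)
    (h1 : (QuotientGroup.mk r' : FreeGroup α ⧸ Subgroup.normalClosure (insert r R₀)) ∈
      commutator (FreeGroup α ⧸ Subgroup.normalClosure (insert r R₀)))
    (hT' : ∃ T' : Finset (FreeGroup α ⧸ Subgroup.normalClosure (insert r' R₀)),
        T'.card = a' ∧ Subgroup.normalClosure (T' : Set _) =
          commutator (FreeGroup α ⧸ Subgroup.normalClosure (insert r' R₀))) :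
    ∃ T : Finset (FreeGroup α ⧸ Subgroup.normalClosure (insert r R₀)),
        T.card ≤ a' + 1 ∧ Subgroup.normalClosure (T : Set _) =
          commutator (FreeGroup α ⧸ Subgroup.normalClosure (insert r R₀)) := by
  classical
  set N : Subgroup (FreeGroup α) := Subgroup.normalClosure (insert r R₀) with hN
  set N' : Subgroup (FreeGroup α) := Subgroup.normalClosure (insert r' R₀) with hN'
  set P : Subgroup (FreeGroup α) := Subgroup.normalClosure (insert r' (insert r R₀)) with hP
  have hNP : N ≤ P := Subgroup.normalClosure_mono (Set.subset_insert _ _)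
  have hN'P : N' ≤ P :=
    Subgroup.normalClosure_mono (Set.insert_subset_insert (Set.subset_insert _ _))
  obtain ⟨T', hcard, hgen⟩ := hT'
  set π : FreeGroup α ⧸ N →* FreeGroup α ⧸ P := QuotientGroup.map N P (MonoidHom.id (FreeGroup α)) hNP with hπdef
  set π' : FreeGroup α ⧸ N' →* FreeGroup α ⧸ P := QuotientGroup.map N' P (MonoidHom.id (FreeGroup α)) hN'P with hπ'def
  have hπmk : ∀ f : FreeGroup α, π (QuotientGroup.mk f) = QuotientGroup.mk f := by
    intro f; simp [hπdef]; rfl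
  have hπ'mk : ∀ f : FreeGroup α, π' (QuotientGroup.mk f) = QuotientGroup.mk f := by
    intro f; simp [hπ'def]; rfl
  have hπ : Function.Surjective π := by
    intro x; obtain ⟨f, rfl⟩ := QuotientGroup.mk_surjective x
    exact ⟨QuotientGroup.mk f, hπmk f⟩
  have hπ' : Function.Surjective π' := by
    intro x; obtain ⟨f, rfl⟩ := QuotientGroup.mk_surjective x
    exact ⟨QuotientGroup.mk f, hπ'mk f⟩
  -- lift the generators of [G',G'] to elements of [G,G]
  have hlift : ∀ t : FreeGroup α ⧸ N', ∃ g : FreeGroup α ⧸ N,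
      t ∈ T' → g ∈ commutator (FreeGroup α ⧸ N) ∧ π g = π' t := by
    intro t
    by_cases ht : t ∈ T'
    · have htc : t ∈ commutator (FreeGroup α ⧸ N') := hgen ▸ Subgroup.subset_normalClosure ht
      have h2 : π' t ∈ commutator (FreeGroup α ⧸ P) :=
        (maqiu_map_commutator π' hπ') ▸ Subgroup.mem_map_of_mem π' htc
      rw [← maqiu_map_commutator π hπ] at h2
      obtain ⟨g, hg, hgπ⟩ := h2
      exact ⟨g, fun _ => ⟨hg, hgπ⟩⟩
    · exact ⟨1, fun h => absurd h ht⟩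
  choose l hl using hlift
  set T : Finset (FreeGroup α ⧸ N) := insert (QuotientGroup.mk r') (T'.image l) with hT
  refine ⟨T, ?_, ?_⟩
  · calc T.card ≤ (T'.image l).card + 1 := Finset.card_insert_le _ _
      _ ≤ T'.card + 1 := by gcongr; exact Finset.card_image_le
      _ = a' + 1 := by rw [hcard]
  · apply le_antisymm
    · apply Subgroup.normalClosure_le_normal
      intro x hx
      simp only [hT, Finset.coe_insert, Set.mem_insert_iff, Finset.coe_image,
        Set.mem_image, Finset.mem_coe] at hx
      rcases hx with rfl | ⟨t, ht, rfl⟩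
      · exact h1
      · exact (hl t ht).1
    · -- the kernel of π is contained in the normal closure of T
      have hker : ∀ x : FreeGroup α ⧸ N, π x = 1 → x ∈ Subgroup.normalClosure (T : Set (FreeGroup α ⧸ N)) := by
        intro x hx
        obtain ⟨f, rfl⟩ := QuotientGroup.mk_surjective x
        rw [hπmk] at hx
        have hfP : f ∈ P := (QuotientGroup.eq_one_iff f).mp hx
        have hmem : QuotientGroup.mk f ∈
            Subgroup.map (QuotientGroup.mk' N) P := ⟨f, hfP, rfl⟩
        rw [hP, Subgroup.map_normalClosure _ _ (QuotientGroup.mk'_surjective N)] at hmem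
        refine Subgroup.normalClosure_le_normal ?_ hmem
        intro y hy
        obtain ⟨s, hs, rfl⟩ := hy
        rcases hs with rfl | hs
        · exact Subgroup.subset_normalClosure (by simp [hT])
        · have : (QuotientGroup.mk' N) s = 1 :=
            (QuotientGroup.eq_one_iff s).mpr (Subgroup.subset_normalClosure hs)
          rw [this]; exact one_mem _
      intro g hg
      have h2 : π g ∈ commutator (FreeGroup α ⧸ P) :=
        (maqiu_map_commutator π hπ) ▸ Subgroup.mem_map_of_mem π hg
      have h3 : commutator (FreeGroup α ⧸ P) ≤
          Subgroup.map π (Subgroup.normalClosure (T : Set (FreeGroup α ⧸ N))) := by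
        rw [← maqiu_map_commutator π' hπ', ← hgen,
          Subgroup.map_normalClosure _ _ hπ']
        rw [Subgroup.map_normalClosure _ _ hπ]
        apply Subgroup.normalClosure_mono
        intro y hy
        obtain ⟨t, ht, rfl⟩ := hy
        refine ⟨l t, ?_, (hl t ht).2⟩
        simp only [hT, Finset.coe_insert, Set.mem_insert_iff, Finset.coe_image,
          Set.mem_image, Finset.mem_coe]
        exact Or.inr ⟨t, ht, rfl⟩
      obtain ⟨m, hm, hmg⟩ := h3 h2
      have hk : g * m⁻¹ ∈ Subgroup.normalClosure (T : Set (FreeGroup α ⧸ N)) := by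
        apply hker
        rw [map_mul, map_inv, hmg, mul_inv_cancel]
      have := mul_mem hk hm
      simpa using this


/-- A single null-homologous relator replacement changes the Ma-Qiu index by at most 1. -/
theorem MaQiu_single_relator_replacement {α : Type*} (R₀ : Set (FreeGroup α))
    (r r' : FreeGroup α) (a a' : ℕ)
    (h1 : (QuotientGroup.mk r' : FreeGroup α ⧸ Subgroup.normalClosure (insert r R₀)) ∈
      commutator (FreeGroup α ⧸ Subgroup.normalClosure (insert r R₀)))
    (h2 : (QuotientGroup.mk r : FreeGroup α ⧸ Subgroup.normalClosure (insert r' R₀)) ∈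
      commutator (FreeGroup α ⧸ Subgroup.normalClosure (insert r' R₀)))
    (hab : Nonempty
      (Abelianization (FreeGroup α ⧸ Subgroup.normalClosure (insert r R₀)) ≃*
        Abelianization (FreeGroup α ⧸ Subgroup.normalClosure (insert r' R₀))))
    (ha : IsLeast {n : ℕ |
      ∃ T : Finset (FreeGroup α ⧸ Subgroup.normalClosure (insert r R₀)),
        T.card = n ∧ Subgroup.normalClosure (T : Set _) =
          commutator (FreeGroup α ⧸ Subgroup.normalClosure (insert r R₀))} a)
    (ha' : IsLeast {n : ℕ |
      ∃ T : Finset (FreeGroup α ⧸ Subgroup.normalClosure (insert r' R₀)),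
        T.card = n ∧ Subgroup.normalClosure (T : Set _) =
          commutator (FreeGroup α ⧸ Subgroup.normalClosure (insert r' R₀))} a') :
    a ≤ a' + 1 ∧ a' ≤ a + 1 := by
  constructor
  · obtain ⟨T, hTcard, hTgen⟩ := maqiu_aux R₀ r r' a' h1 ha'.1
    exact le_trans (ha.2 ⟨T, rfl, hTgen⟩) hTcard
  · obtain ⟨T, hTcard, hTgen⟩ := maqiu_aux R₀ r' r a h2 ha.1
    exact le_trans (ha'.2 ⟨T, rfl, hTgen⟩) hTcard
end

section
/- If a group G is generated by r elements, then the commutator subgroup [G,G] is normally generated by at most r + h(h−3)/2 elements, where h is the minimal number of generators of the abelianization G/[G,G]. In particular a(G) is finite for finitely generated G. -/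
open Subgroup
open scoped commutatorElement

section Helpers

variable {G : Type*} [Group G]

/-- Elements of the closure of a set of pairwise commuting elements commute. -/
private lemma commute_closure {s : Set G} (hs : ∀ a ∈ s, ∀ b ∈ s, Commute a b)
    {a b : G} (ha : a ∈ closure s) (hb : b ∈ closure s) : Commute a b := by
  induction ha, hb using closure_induction₂ with
  | mem x y hx hy => exact hs x hx y hy
  | one_left x hx => exact Commute.one_left x
  | one_right x hx => exact Commute.one_right x
  | mul_left x y z _ _ _ h1 h2 => exact h1.mul_left h2
  | mul_right y z x _ _ _ h1 h2 => exact h1.mul_right h2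
  | inv_left x y _ _ h => exact h.inv_left
  | inv_right x y _ _ h => exact h.inv_right

private lemma closure_range_update {r : ℕ} (x : Fin r → G) {i j : Fin r} (hij : i ≠ j) (q : ℤ) :
    closure (Set.range (Function.update x j (x j * x i ^ q))) = closure (Set.range x) := by
  set y := Function.update x j (x j * x i ^ q) with hy
  have hyne : ∀ k, k ≠ j → y k = x k := fun k hk => Function.update_of_ne hk _ _
  apply le_antisymm
  · rw [closure_le]
    rintro a ⟨k, rfl⟩
    by_cases hk : k = j
    · rw [hk, hy, Function.update_self]
      exact mul_mem (Subgroup.subset_closure (Set.mem_range_self j)) (zpow_mem (Subgroup.subset_closure (Set.mem_range_self i)) q)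
    · rw [hyne k hk]; exact Subgroup.subset_closure (Set.mem_range_self k)
  · rw [closure_le]
    rintro a ⟨k, rfl⟩
    by_cases hk : k = j
    · have hxj : x j = y j * (y i ^ q)⁻¹ := by
        rw [hy, Function.update_self, Function.update_of_ne hij]
        group
      rw [hk, hxj]
      exact mul_mem (Subgroup.subset_closure (Set.mem_range_self j))
        (inv_mem (zpow_mem (Subgroup.subset_closure (Set.mem_range_self i)) q))
    · rw [← hyne k hk]; exact Subgroup.subset_closure (Set.mem_range_self k)

private lemma closure_image_update {r : ℕ} {H : Type*} [Group H] (z : Fin r → H)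
    {I : Finset (Fin r)} {i j : Fin r} (hi : i ∈ I) (hj : j ∈ I) (hij : i ≠ j) (q : ℤ) :
    closure (Function.update z j (z j * z i ^ q) '' (I : Set (Fin r))) =
      closure (z '' (I : Set (Fin r))) := by
  set y := Function.update z j (z j * z i ^ q) with hy
  have hyne : ∀ k, k ≠ j → y k = z k := fun k hk => Function.update_of_ne hk _ _
  apply le_antisymm
  · rw [closure_le]
    rintro a ⟨k, hk, rfl⟩
    by_cases hkj : k = j
    · rw [hkj, hy, Function.update_self]
      exact mul_mem (Subgroup.subset_closure (Set.mem_image_of_mem _ (Finset.mem_coe.mpr hj)))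
        (zpow_mem (Subgroup.subset_closure (Set.mem_image_of_mem _ (Finset.mem_coe.mpr hi))) q)
    · rw [hyne k hkj]; exact Subgroup.subset_closure (Set.mem_image_of_mem _ hk)
  · rw [closure_le]
    rintro a ⟨k, hk, rfl⟩
    by_cases hkj : k = j
    · have hzj : z j = y j * (y i ^ q)⁻¹ := by
        rw [hy, Function.update_self, Function.update_of_ne hij]
        group
      rw [hkj, hzj]
      exact mul_mem (Subgroup.subset_closure (Set.mem_image_of_mem _ (Finset.mem_coe.mpr hj)))
        (inv_mem (zpow_mem (Subgroup.subset_closure (Set.mem_image_of_mem _ (Finset.mem_coe.mpr hi))) q))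
    · rw [← hyne k hkj]; exact Subgroup.subset_closure (Set.mem_image_of_mem _ hk)

private lemma span_ofMul_eq_top {A : Type*} [CommGroup A] {s : Set A}
    (hs : closure s = ⊤) : Submodule.span ℤ (Additive.ofMul '' s) = ⊤ := by
  have key : ∀ b ∈ closure s, Additive.ofMul b ∈ Submodule.span ℤ (Additive.ofMul '' s) := by
    intro b hb
    induction hb using closure_induction with
    | mem y hy => exact Submodule.subset_span ⟨y, hy, rfl⟩
    | one => simpa using (Submodule.span ℤ (Additive.ofMul '' s)).zero_mem
    | mul y z _ _ hy hz => rw [ofMul_mul]; exact add_mem hy hz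
    | inv y _ hy => rw [ofMul_inv]; exact neg_mem hy
  rw [eq_top_iff]
  rintro a -
  exact key (Additive.toMul a) (hs ▸ Subgroup.mem_top _)

private lemma int_gcd_eq_one_of_dvd_one {β : Type*} {s : Finset β} {f : β → ℤ}
    (h : s.gcd f ∣ 1) : s.gcd f = 1 := by
  rcases Int.isUnit_iff.mp (isUnit_of_dvd_one h) with h1 | h1
  · exact h1
  · have hn := Finset.normalize_gcd (s := s) (f := f)
    rw [h1, Int.normalize_of_nonpos (by norm_num)] at hn
    norm_num at hn

end Helpers

section Reduction

variable {G : Type*} [Group G] {A : Type*} [CommGroup A]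

/-- If the images of the subtuple indexed by `I` generate `A`, which has a generating set
smaller than `I`, then there is a primitive integer relation supported on `I`. -/
private lemma exists_relation (π : G →* A) {r : ℕ} (x : Fin r → G) (I : Finset (Fin r))
    (hI : closure (π '' (x '' (I : Set (Fin r)))) = ⊤)
    (W : Finset A) (hW : closure (W : Set A) = ⊤) (hlt : W.card < I.card) :
    ∃ u : Fin r → ℤ, (∀ i ∉ I, u i = 0) ∧ (∃ i, u i ≠ 0) ∧ I.gcd u = 1 ∧
      ∏ i ∈ I, π (x i) ^ u i = 1 := by
  classical
  set v : {k // k ∈ I} → Additive A := fun i => Additive.ofMul (π (x i.1)) with hv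
  set vW : {w // w ∈ W} → Additive A := fun w => Additive.ofMul (w.1 : A) with hvW
  let φ : ({k // k ∈ I} → ℤ) →ₗ[ℤ] Additive A :=
    { toFun := fun u => ∑ i, u i • v i
      map_add' := by intro a b; simp [add_smul, Finset.sum_add_distrib]
      map_smul' := by intro c a; simp [mul_smul, Finset.smul_sum] }
  let ψ : ({w // w ∈ W} → ℤ) →ₗ[ℤ] Additive A :=
    { toFun := fun u => ∑ i, u i • vW i
      map_add' := by intro a b; simp [add_smul, Finset.sum_add_distrib]
      map_smul' := by intro c a; simp [mul_smul, Finset.smul_sum] }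
  have hφapply : ∀ u, φ u = ∑ i, u i • v i := fun u => rfl
  have hψapply : ∀ u, ψ u = ∑ i, u i • vW i := fun u => rfl
  have hψ : Function.Surjective ψ := by
    rw [← LinearMap.range_eq_top, eq_top_iff, ← span_ofMul_eq_top hW, Submodule.span_le]
    rintro a ⟨w, hw, rfl⟩
    refine ⟨Pi.single ⟨w, hw⟩ 1, ?_⟩
    rw [hψapply]
    simp [Pi.single_apply, ite_smul, hvW]
  obtain ⟨l, hl⟩ := Module.projective_lifting_property ψ φ hψ
  have hnotinj : ¬ Function.Injective l := by
    intro hinj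
    have h1 := LinearMap.lift_rank_le_of_injective l hinj
    rw [rank_fun', rank_fun', Cardinal.lift_natCast, Cardinal.lift_natCast,
      Fintype.card_coe, Fintype.card_coe, Nat.cast_le] at h1
    exact absurd h1 (not_le.mpr hlt)
  obtain ⟨a, b, hab, habne⟩ := Function.not_injective_iff.mp hnotinj
  set v0 : {k // k ∈ I} → ℤ := a - b with hv0
  have hv0ne : v0 ≠ 0 := sub_ne_zero.mpr habne
  have hlv0 : l v0 = 0 := by rw [hv0, map_sub, hab, sub_self]
  set d : ℤ := Finset.univ.gcd v0 with hd
  have hd0 : d ≠ 0 := by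
    intro h0
    exact hv0ne (funext fun i => Finset.gcd_eq_zero_iff.mp h0 i (Finset.mem_univ i))
  set u0 : {k // k ∈ I} → ℤ := fun i => v0 i / d with hu0
  have hdu : ∀ i, v0 i = d * u0 i := fun i =>
    (Int.mul_ediv_cancel' (Finset.gcd_dvd (Finset.mem_univ i))).symm
  have hv0smul : v0 = d • u0 := funext fun i => by simpa [smul_eq_mul] using hdu i
  have hlu0 : l u0 = 0 := by
    have h0 : d • l u0 = (0 : {w // w ∈ W} → ℤ) := by rw [← map_smul, ← hv0smul, hlv0]
    ext j
    have := congrFun h0 j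
    simp only [Pi.smul_apply, smul_eq_mul, Pi.zero_apply] at this ⊢
    rcases mul_eq_zero.mp this with h | h
    · exact absurd h hd0
    · exact h
  have hφu0 : φ u0 = 0 := by
    rw [← hl, LinearMap.comp_apply, hlu0, map_zero]
  have hsum0 : ∑ i, u0 i • v i = 0 := by rw [← hφapply]; exact hφu0
  have hprod0 : ∏ i : {k // k ∈ I}, π (x i.1) ^ u0 i = 1 := by
    have h1 : Additive.ofMul (∏ i : {k // k ∈ I}, π (x i.1) ^ u0 i) = (0 : Additive A) := by
      rw [ofMul_prod]
      simpa [ofMul_zpow, hv] using hsum0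
    have := Additive.ofMul.injective (a₁ := ∏ i : {k // k ∈ I}, π (x i.1) ^ u0 i) (a₂ := 1)
    exact this (by simpa using h1)
  have hu0ne : ∃ j, u0 j ≠ 0 := by
    by_contra hcon
    push_neg at hcon
    exact hv0ne (funext fun i => by rw [hdu i, hcon i, mul_zero]; rfl)
  have hgcd0 : Finset.univ.gcd u0 = 1 := by
    apply int_gcd_eq_one_of_dvd_one
    have hdvd : d * Finset.univ.gcd u0 ∣ d := by
      have hall : ∀ i ∈ Finset.univ, d * Finset.univ.gcd u0 ∣ v0 i := fun i _ => by
        rw [hdu i]; exact mul_dvd_mul_left d (Finset.gcd_dvd (Finset.mem_univ i))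
      exact Finset.dvd_gcd hall
    exact (mul_dvd_mul_iff_left hd0).mp (by simpa using hdvd)
  refine ⟨fun k => if hk : k ∈ I then u0 ⟨k, hk⟩ else 0, fun i hi => dif_neg hi, ?_, ?_, ?_⟩
  · obtain ⟨j, hj⟩ := hu0ne
    exact ⟨j.1, by simpa [dif_pos j.2] using hj⟩
  · apply int_gcd_eq_one_of_dvd_one
    rw [← hgcd0]
    apply Finset.dvd_gcd
    intro j _
    have : (fun k => if hk : k ∈ I then u0 ⟨k, hk⟩ else 0) j.1 = u0 j := by simp [dif_pos j.2]
    rw [← this]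
    exact Finset.gcd_dvd j.2
  · rw [← Finset.prod_attach I (fun k => π (x k) ^ (if hk : k ∈ I then u0 ⟨k, hk⟩ else 0))]
    rw [← hprod0]
    rw [Finset.univ_eq_attach]
    apply Finset.prod_congr rfl
    intro i _
    simp [dif_pos i.2]

/-- Given a primitive relation supported on `I`, Nielsen moves produce a tuple with the same
closures in which some entry indexed by `I` has trivial image in `A`. -/
private lemma reduce_relation (π : G →* A) {r : ℕ} :
    ∀ (n : ℕ) (x : Fin r → G) (I : Finset (Fin r)) (u : Fin r → ℤ),
      closure (Set.range x) = ⊤ →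
      closure (π '' (x '' (I : Set (Fin r)))) = ⊤ →
      (∀ i ∉ I, u i = 0) → (∃ i, u i ≠ 0) → I.gcd u = 1 →
      (∏ i ∈ I, π (x i) ^ u i) = 1 →
      (∑ i ∈ I, (u i).natAbs) ≤ n →
      ∃ (y : Fin r → G) (i₀ : Fin r), i₀ ∈ I ∧ closure (Set.range y) = ⊤ ∧
        closure (π '' (y '' (I : Set (Fin r)))) = ⊤ ∧ π (y i₀) = 1 := by
  intro n
  induction n with
  | zero =>
    intro x I u hx hI hsupp hne hgcd hrel hsum
    exfalso
    obtain ⟨i, hi⟩ := hne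
    have hiI : i ∈ I := by
      by_contra hiI
      exact hi (hsupp i hiI)
    have : (u i).natAbs = 0 :=
      Nat.eq_zero_of_le_zero (le_trans (Finset.single_le_sum (f := fun j => (u j).natAbs) (fun j _ => Nat.zero_le _) hiI) hsum)
    exact hi (Int.natAbs_eq_zero.mp this)
  | succ n ih =>
    intro x I u hx hI hsupp hne hgcd hrel hsum
    classical
    obtain ⟨i₀, hi₀⟩ := hne
    have hi₀I : i₀ ∈ I := by
      by_contra hiI
      exact hi₀ (hsupp i₀ hiI)
    by_cases hone : ∀ j, j ≠ i₀ → u j = 0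
    · -- only one nonzero coefficient, which must be ±1
      have hdvd : u i₀ ∣ 1 := by
        rw [← hgcd]
        apply Finset.dvd_gcd
        intro b hb
        by_cases hbi : b = i₀
        · subst hbi; exact dvd_refl _
        · rw [hone b hbi]; exact dvd_zero _
      have hprod : ∏ i ∈ I, π (x i) ^ u i = π (x i₀) ^ u i₀ :=
        Finset.prod_eq_single_of_mem i₀ hi₀I (fun b _ hbne => by rw [hone b hbne, zpow_zero])
      rw [hprod] at hrel
      have hπ1 : π (x i₀) = 1 := by
        rcases Int.isUnit_iff.mp (isUnit_of_dvd_one hdvd) with h1 | h1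
        · rwa [h1, zpow_one] at hrel
        · rw [h1] at hrel
          simpa using hrel
      exact ⟨x, i₀, hi₀I, hx, hI, hπ1⟩
    · push_neg at hone
      obtain ⟨j, hjne, hju⟩ := hone
      have hjI : j ∈ I := by
        by_contra hjI'
        exact hju (hsupp j hjI')
      obtain ⟨bg, sm, hbgI, hsmI, hnesm, hubg, husm, habs⟩ :
          ∃ bg sm, bg ∈ I ∧ sm ∈ I ∧ sm ≠ bg ∧ u bg ≠ 0 ∧ u sm ≠ 0 ∧
            (u sm).natAbs ≤ (u bg).natAbs := by
        rcases le_or_gt (u j).natAbs (u i₀).natAbs with hord | hord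
        · exact ⟨i₀, j, hi₀I, hjI, hjne, hi₀, hju, hord⟩
        · exact ⟨j, i₀, hjI, hi₀I, fun hcon => hjne hcon.symm, hju, hi₀, le_of_lt hord⟩
      set q : ℤ := u bg / u sm with hq
      set rem : ℤ := u bg % u sm with hrem
      have hqr : u sm * q + rem = u bg := Int.mul_ediv_add_emod _ _
      have hremabs : rem.natAbs < (u sm).natAbs := by
        have h1 : (0 : ℤ) ≤ rem := Int.emod_nonneg _ husm
        have h2 : rem < ((u sm).natAbs : ℤ) := by
          have heq : u bg % u sm = u bg % ((u sm).natAbs : ℤ) := by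
            rcases Int.natAbs_eq (u sm) with hh | hh
            · rw [← hh]
            · conv_lhs => rw [hh]
              rw [Int.emod_neg]
          rw [hrem, heq]
          apply Int.emod_lt_of_pos
          have : (u sm).natAbs ≠ 0 := Int.natAbs_ne_zero.mpr husm
          omega
        omega
      have hremlt : rem.natAbs < (u bg).natAbs := lt_of_lt_of_le hremabs habs
      set x' : Fin r → G := Function.update x sm (x sm * x bg ^ q) with hx'def
      set u' : Fin r → ℤ := Function.update u bg rem with hu'def
      have hbgsm : bg ≠ sm := fun hcon => hnesm hcon.symm
      have hx'ran : closure (Set.range x') = ⊤ := by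
        rw [hx'def, closure_range_update x hbgsm q]; exact hx
      have hx'I : closure (π '' (x' '' (I : Set (Fin r)))) = ⊤ := by
        have hfun : (⇑π ∘ x') = Function.update (⇑π ∘ x) sm ((⇑π ∘ x) sm * (⇑π ∘ x) bg ^ q) := by
          rw [hx'def, Function.comp_update]
          congr 1
          simp [map_zpow]
        have himg : ⇑π '' (x' '' (I : Set (Fin r))) =
            Function.update (⇑π ∘ x) sm ((⇑π ∘ x) sm * (⇑π ∘ x) bg ^ q) '' (I : Set (Fin r)) := by
          rw [Set.image_image]
          exact congrArg (fun f => f '' (I : Set (Fin r))) hfun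
        rw [himg, closure_image_update (⇑π ∘ x) hbgI hsmI hbgsm q]
        rw [show (⇑π ∘ x) '' (I : Set (Fin r)) = ⇑π '' (x '' (I : Set (Fin r))) by
          rw [Set.image_image]; rfl]
        exact hI
      have hx'bg : x' bg = x bg := Function.update_of_ne hbgsm _ _
      have hx'sm : x' sm = x sm * x bg ^ q := Function.update_self _ _ _
      have hu'bg : u' bg = rem := Function.update_self _ _ _
      have hu'ne : ∀ k, k ≠ bg → u' k = u k := fun k hk => Function.update_of_ne hk _ _
      have hsmmem : sm ∈ I.erase bg := Finset.mem_erase.mpr ⟨hnesm, hsmI⟩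
      have hrel' : ∏ i ∈ I, π (x' i) ^ u' i = 1 := by
        have hexp : π (x bg) ^ rem * (π (x sm) * π (x bg) ^ q) ^ u sm =
            π (x bg) ^ u bg * π (x sm) ^ u sm := by
          rw [mul_zpow, ← zpow_mul]
          rw [mul_comm (π (x sm) ^ u sm) (π (x bg) ^ (q * u sm)), ← mul_assoc, ← zpow_add]
          congr 2
          linear_combination hqr
        have hnew : ∏ i ∈ I, π (x' i) ^ u' i =
            π (x' bg) ^ u' bg * (π (x' sm) ^ u' sm * ∏ i ∈ (I.erase bg).erase sm, π (x' i) ^ u' i) := by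
          rw [← Finset.mul_prod_erase I _ hbgI, ← Finset.mul_prod_erase (I.erase bg) _ hsmmem]
        have hold : ∏ i ∈ I, π (x i) ^ u i =
            π (x bg) ^ u bg * (π (x sm) ^ u sm * ∏ i ∈ (I.erase bg).erase sm, π (x i) ^ u i) := by
          rw [← Finset.mul_prod_erase I _ hbgI, ← Finset.mul_prod_erase (I.erase bg) _ hsmmem]
        have hrest : ∏ i ∈ (I.erase bg).erase sm, π (x' i) ^ u' i =
            ∏ i ∈ (I.erase bg).erase sm, π (x i) ^ u i := by
          apply Finset.prod_congr rfl
          intro k hk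
          have hk1 : k ≠ sm := (Finset.mem_erase.mp hk).1
          have hk2 : k ≠ bg := (Finset.mem_erase.mp (Finset.mem_erase.mp hk).2).1
          rw [hu'ne k hk2, hx'def, Function.update_of_ne hk1]
        rw [hnew, hrest, hx'bg, hx'sm, hu'bg, hu'ne sm hnesm]
        rw [map_mul, map_zpow]
        calc π (x bg) ^ rem * ((π (x sm) * π (x bg) ^ q) ^ u sm *
                ∏ i ∈ (I.erase bg).erase sm, π (x i) ^ u i)
            = (π (x bg) ^ rem * (π (x sm) * π (x bg) ^ q) ^ u sm) *
                ∏ i ∈ (I.erase bg).erase sm, π (x i) ^ u i := by rw [mul_assoc]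
          _ = (π (x bg) ^ u bg * π (x sm) ^ u sm) *
                ∏ i ∈ (I.erase bg).erase sm, π (x i) ^ u i := by rw [hexp]
          _ = ∏ i ∈ I, π (x i) ^ u i := by rw [hold, mul_assoc]
          _ = 1 := hrel
      have hsupp' : ∀ i ∉ I, u' i = 0 := by
        intro i hi
        have : i ≠ bg := fun hcon => hi (hcon ▸ hbgI)
        rw [hu'ne i this]
        exact hsupp i hi
      have hne' : ∃ i, u' i ≠ 0 := ⟨sm, by rw [hu'ne sm hnesm]; exact husm⟩
      have hgcd' : I.gcd u' = 1 := by
        apply int_gcd_eq_one_of_dvd_one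
        rw [← hgcd]
        apply Finset.dvd_gcd
        intro b hb
        by_cases hbbg : b = bg
        · subst hbbg
          rw [← hqr]
          apply dvd_add
          · apply Dvd.dvd.mul_right
            have := Finset.gcd_dvd (f := u') hsmI
            rwa [hu'ne sm hnesm] at this
          · have := Finset.gcd_dvd (f := u') hbgI
            rwa [hu'bg] at this
        · have := Finset.gcd_dvd (f := u') hb
          rwa [hu'ne b hbbg] at this
      have hsum' : ∑ i ∈ I, (u' i).natAbs ≤ n := by
        have hlt : ∑ i ∈ I, (u' i).natAbs < ∑ i ∈ I, (u i).natAbs := by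
          apply Finset.sum_lt_sum
          · intro i hi
            by_cases hibg : i = bg
            · subst hibg; rw [hu'bg]; exact le_of_lt hremlt
            · rw [hu'ne i hibg]
          · exact ⟨bg, hbgI, by rw [hu'bg]; exact hremlt⟩
        omega
      exact ih x' I u' hx'ran hx'I hsupp' hne' hgcd' hrel' hsum'

/-- Iterating the reduction: from any generating tuple one obtains a generating tuple
together with `h` indices whose images generate `A`. -/
private lemma find_good_tuple (π : G →* A) {r h : ℕ}
    (W : Finset A) (hWcard : W.card ≤ h) (hW : closure (W : Set A) = ⊤) :
    ∀ (k : ℕ) (I : Finset (Fin r)) (x : Fin r → G), I.card = k + h →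
      closure (Set.range x) = ⊤ → closure (π '' (x '' (I : Set (Fin r)))) = ⊤ →
      ∃ (y : Fin r → G) (J : Finset (Fin r)), J.card = h ∧ closure (Set.range y) = ⊤ ∧
        closure (π '' (y '' (J : Set (Fin r)))) = ⊤ := by
  intro k
  induction k with
  | zero => exact fun I x hcard hx hI => ⟨x, I, by simpa using hcard, hx, hI⟩
  | succ k ih =>
    intro I x hcard hx hI
    obtain ⟨u, hsupp, hne, hgcd, hrel⟩ :=
      exists_relation π x I hI W hW (by omega)
    obtain ⟨y, i₀, hi₀I, hy, hyI, hyi₀⟩ :=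
      reduce_relation π (∑ i ∈ I, (u i).natAbs) x I u hx hI hsupp hne hgcd hrel le_rfl
    have hcard' : (I.erase i₀).card = k + h := by
      rw [Finset.card_erase_of_mem hi₀I, hcard]
      omega
    apply ih (I.erase i₀) y hcard' hy
    have hle : closure (π '' (y '' (I : Set (Fin r)))) ≤
        closure (π '' (y '' ((I.erase i₀ : Finset (Fin r)) : Set (Fin r)))) := by
      rw [closure_le]
      rintro a ⟨b, ⟨kk, hkk, rfl⟩, rfl⟩
      by_cases hk : kk = i₀
      · subst hk
        rw [hyi₀]
        exact one_mem _
      · refine Subgroup.subset_closure ⟨y kk, ⟨kk, ?_, rfl⟩, rfl⟩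
        rw [Finset.coe_erase]
        exact ⟨hkk, by simpa using hk⟩
    exact le_antisymm le_top (hyI ▸ hle)

end Reduction

section Counting

private lemma card_filter_lt_pairs {n : ℕ} (J : Finset (Fin n)) :
    ((J ×ˢ J).filter (fun p => p.1 < p.2)).card ≤ J.card * (J.card - 1) / 2 := by
  classical
  set P := (J ×ˢ J).filter (fun p => p.1 < p.2) with hP
  set P' := (J ×ˢ J).filter (fun p => p.2 < p.1) with hP'
  have hcardeq : P.card = P'.card := by
    apply Finset.card_bij (fun p _ => (p.2, p.1))
    · intro p hp
      rw [hP, Finset.mem_filter, Finset.mem_product] at hp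
      rw [hP', Finset.mem_filter, Finset.mem_product]
      exact ⟨⟨hp.1.2, hp.1.1⟩, hp.2⟩
    · intro p hp q hq hpq
      have h1 := congrArg Prod.fst hpq
      have h2 := congrArg Prod.snd hpq
      exact Prod.ext h2 h1
    · intro p hp
      rw [hP', Finset.mem_filter, Finset.mem_product] at hp
      refine ⟨(p.2, p.1), ?_, rfl⟩
      rw [hP, Finset.mem_filter, Finset.mem_product]
      exact ⟨⟨hp.1.2, hp.1.1⟩, hp.2⟩
  have hdisj : Disjoint P P' := by
    rw [Finset.disjoint_left]
    intro p hp hp'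
    have h1 := (Finset.mem_filter.mp hp).2
    have h2 := (Finset.mem_filter.mp hp').2
    exact absurd h2 (not_lt.mpr (le_of_lt h1))
  have hsub : P ∪ P' ⊆ J.offDiag := by
    intro p hp
    rcases Finset.mem_union.mp hp with hp | hp
    · obtain ⟨hmem, hlt⟩ := Finset.mem_filter.mp hp
      obtain ⟨h1, h2⟩ := Finset.mem_product.mp hmem
      exact Finset.mem_offDiag.mpr ⟨h1, h2, ne_of_lt hlt⟩
    · obtain ⟨hmem, hlt⟩ := Finset.mem_filter.mp hp
      obtain ⟨h1, h2⟩ := Finset.mem_product.mp hmem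
      exact Finset.mem_offDiag.mpr ⟨h1, h2, (ne_of_lt hlt).symm⟩
  have hcard2 : P.card * 2 ≤ J.card * J.card - J.card := by
    have h1 : P.card + P'.card = (P ∪ P').card := (Finset.card_union_of_disjoint hdisj).symm
    have h2 : (P ∪ P').card ≤ J.offDiag.card := Finset.card_le_card hsub
    rw [Finset.offDiag_card] at h2
    omega
  rw [Nat.le_div_iff_mul_le two_pos]
  have heq : J.card * (J.card - 1) = J.card * J.card - J.card := by
    rw [Nat.mul_sub, Nat.mul_one]
  omega

private lemma nat_count_bound {r h : ℕ} (hhr : h ≤ r) :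
    (r - h) + h * (h - 1) / 2 ≤ r + h * (h - 3) / 2 := by
  have key : h * (h - 1) / 2 ≤ h + h * (h - 3) / 2 := by
    match h with
    | 0 => simp
    | 1 => simp
    | 2 => norm_num
    | (m + 3) =>
      have h1 : (m + 3) * (m + 3 - 1) = (m + 3) * m + (m + 3) * 2 := by
        have he : m + 3 - 1 = m + 2 := rfl
        rw [he]; ring
      have h2 : m + 3 - 3 = m := by omega
      rw [h1, h2, Nat.add_mul_div_right _ _ (two_pos), Nat.add_comm]
  calc (r - h) + h * (h - 1) / 2 ≤ (r - h) + (h + h * (h - 3) / 2) :=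
        Nat.add_le_add_left key _
    _ = ((r - h) + h) + h * (h - 3) / 2 := by omega
    _ = r + h * (h - 3) / 2 := by rw [Nat.sub_add_cancel hhr]

end Counting

/-- If `G` is generated by `r` elements and its abelianization has minimal number of
generators `h`, then `a(G) ≤ r + h(h-3)/2`. -/
theorem MaQiu_rank_bound (G : Type*) [Group G] (r h : ℕ)
    (hr : ∃ S : Finset G, S.card = r ∧ Subgroup.closure (S : Set G) = ⊤)
    (hh : IsLeast {n : ℕ |
      ∃ S : Finset (Abelianization G), S.card = n ∧ Subgroup.closure (S : Set (Abelianization G)) = ⊤} h) :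
    ∃ T : Finset G, T.card ≤ r + h * (h - 3) / 2 ∧
      Subgroup.normalClosure (T : Set G) = commutator G := by
  classical
  obtain ⟨S, hScard, hSgen⟩ := hr
  obtain ⟨⟨W, hWcard, hWgen⟩, hmin⟩ := hh
  set π := (Abelianization.of : G →* Abelianization G) with hπ
  have hπsurj : Function.Surjective π := fun a => by
    obtain ⟨g, hg⟩ := QuotientGroup.mk_surjective a
    exact ⟨g, hg⟩
  have hker : π.ker = commutator G := by
    ext g
    exact QuotientGroup.eq_one_iff g
  -- h ≤ r
  have hhr : h ≤ r := by
    have hmem : (S.image π).card ∈ {n : ℕ |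
        ∃ S : Finset (Abelianization G), S.card = n ∧
          Subgroup.closure (S : Set (Abelianization G)) = ⊤} := by
      refine ⟨S.image π, rfl, ?_⟩
      rw [Finset.coe_image, ← MonoidHom.map_closure, hSgen]
      exact Subgroup.map_top_of_surjective π hπsurj
    exact le_trans (hmin hmem) (le_trans Finset.card_image_le hScard.le)
  -- enumerate S
  let e : {g // g ∈ S} ≃ Fin r := S.equivFin.trans (finCongr hScard)
  set x : Fin r → G := fun i => ((e.symm i : {g // g ∈ S}) : G) with hxdef
  have hrange : Set.range x = (S : Set G) := by
    ext g
    constructor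
    · rintro ⟨i, rfl⟩
      exact (e.symm i).2
    · intro hg
      exact ⟨e ⟨g, hg⟩, by simp [hxdef]⟩
  have hxgen : Subgroup.closure (Set.range x) = ⊤ := by rw [hrange]; exact hSgen
  have hIimg : Subgroup.closure (π '' (x '' ((Finset.univ : Finset (Fin r)) : Set (Fin r)))) = ⊤ := by
    rw [Finset.coe_univ, Set.image_univ, hrange, ← MonoidHom.map_closure, hSgen]
    exact Subgroup.map_top_of_surjective π hπsurj
  obtain ⟨y, J, hJcard, hygen, hyJ⟩ :=
    find_good_tuple π W (le_of_eq hWcard) hWgen (r - h) Finset.univ x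
      (by rw [Finset.card_univ, Fintype.card_fin]; omega) hxgen hIimg
  -- the subset B with images generating the abelianization
  set B : Finset G := J.image y with hB
  have hBgen : Subgroup.closure (π '' (B : Set G)) = ⊤ := by
    rw [hB, Finset.coe_image]
    exact hyJ
  -- choose representatives
  have hw : ∀ g : G, ∃ w, w ∈ Subgroup.closure (B : Set G) ∧ π w = π g := by
    intro g
    have : π g ∈ Subgroup.map π (Subgroup.closure (B : Set G)) := by
      rw [MonoidHom.map_closure, hBgen]
      exact Subgroup.mem_top _
    obtain ⟨w, hw1, hw2⟩ := this
    exact ⟨w, hw1, hw2⟩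
  choose w hwmem hwπ using hw
  set T1 : Finset G := (Finset.univ \ J).image (fun i => y i * (w (y i))⁻¹) with hT1
  set P : Finset (Fin r × Fin r) := (J ×ˢ J).filter (fun p => p.1 < p.2) with hPdef
  set T2 : Finset G := P.image (fun p => ⁅y p.1, y p.2⁆) with hT2
  refine ⟨T1 ∪ T2, ?_, ?_⟩
  · -- cardinality bound
    calc (T1 ∪ T2).card ≤ T1.card + T2.card := Finset.card_union_le _ _
      _ ≤ (r - h) + h * (h - 1) / 2 := by
          apply Nat.add_le_add
          · refine le_trans Finset.card_image_le ?_
            rw [Finset.card_sdiff_of_subset (Finset.subset_univ J), Finset.card_univ, Fintype.card_fin,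
              hJcard]
          · refine le_trans Finset.card_image_le ?_
            have := card_filter_lt_pairs J
            rw [hJcard] at this
            exact this
      _ ≤ r + h * (h - 3) / 2 := nat_count_bound hhr
  · -- normal closure equals commutator subgroup
    set N := Subgroup.normalClosure ((T1 ∪ T2 : Finset G) : Set G) with hN
    apply le_antisymm
    · apply Subgroup.normalClosure_le_normal
      intro g hg
      rw [Finset.coe_union, Set.mem_union] at hg
      rw [SetLike.mem_coe, ← hker, MonoidHom.mem_ker]
      rcases hg with hg | hg
      · rw [hT1] at hg
        obtain ⟨i, hi, rfl⟩ := Finset.mem_coe.mp hg |> Finset.mem_image.mp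
        rw [map_mul, map_inv, hwπ, mul_inv_cancel]
      · rw [hT2] at hg
        obtain ⟨p, hp, rfl⟩ := Finset.mem_coe.mp hg |> Finset.mem_image.mp
        rw [map_commutatorElement]
        exact commutatorElement_eq_one_iff_commute.mpr (mul_comm _ _)
    · -- commutator ≤ N : quotient is abelian
      haveI : N.Normal := Subgroup.normalClosure_normal
      set mk := QuotientGroup.mk' N with hmk
      have hT1N : ∀ i : Fin r, i ∉ J → (y i * (w (y i))⁻¹) ∈ N := by
        intro i hi
        apply Subgroup.subset_normalClosure
        rw [Finset.coe_union, Set.mem_union]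
        left
        rw [hT1]
        exact Finset.mem_coe.mpr (Finset.mem_image.mpr
          ⟨i, Finset.mem_sdiff.mpr ⟨Finset.mem_univ i, hi⟩, rfl⟩)
      have hT2N : ∀ p q : Fin r, p ∈ J → q ∈ J → p < q → ⁅y p, y q⁆ ∈ N := by
        intro p q hp hq hpq
        apply Subgroup.subset_normalClosure
        rw [Finset.coe_union, Set.mem_union]
        right
        rw [hT2]
        exact Finset.mem_coe.mpr (Finset.mem_image.mpr
          ⟨(p, q), Finset.mem_filter.mpr ⟨Finset.mem_product.mpr ⟨hp, hq⟩, hpq⟩, rfl⟩)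
      have hcomm : ∀ a ∈ (mk '' (B : Set G)), ∀ b ∈ (mk '' (B : Set G)), Commute a b := by
        rintro a ⟨a', ha', rfl⟩ b ⟨b', hb', rfl⟩
        rw [hB, Finset.coe_image] at ha' hb'
        obtain ⟨p, hp, rfl⟩ := ha'
        obtain ⟨q, hq, rfl⟩ := hb'
        rw [Finset.mem_coe] at hp hq
        rcases lt_trichotomy p q with hlt | heq | hgt
        · apply commutatorElement_eq_one_iff_commute.mp
          rw [← map_commutatorElement]
          exact (QuotientGroup.eq_one_iff _).mpr (hT2N p q hp hq hlt)
        · subst heq; exact Commute.refl _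
        · symm
          apply commutatorElement_eq_one_iff_commute.mp
          rw [← map_commutatorElement]
          exact (QuotientGroup.eq_one_iff _).mpr (hT2N q p hq hp hgt)
      have hsub : ∀ a : G ⧸ N, a ∈ Subgroup.closure ((mk : G →* G ⧸ N) '' (B : Set G)) := by
        have h1 : Subgroup.closure ((mk : G →* G ⧸ N) '' Set.range y) ≤
            Subgroup.closure ((mk : G →* G ⧸ N) '' (B : Set G)) := by
          rw [Subgroup.closure_le]
          rintro a ⟨g, ⟨i, rfl⟩, rfl⟩
          by_cases hiJ : i ∈ J
          · apply Subgroup.subset_closure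
            exact ⟨y i, by rw [hB, Finset.coe_image]; exact ⟨i, Finset.mem_coe.mpr hiJ, rfl⟩, rfl⟩
          · have hrel1 : mk (y i * (w (y i))⁻¹) = 1 :=
              (QuotientGroup.eq_one_iff _).mpr (hT1N i hiJ)
            have heq : mk (y i) = mk (w (y i)) := by
              rw [map_mul, map_inv] at hrel1
              exact mul_inv_eq_one.mp hrel1
            rw [SetLike.mem_coe, heq]
            have hmem2 : mk (w (y i)) ∈ Subgroup.map mk (Subgroup.closure (B : Set G)) :=
              Subgroup.mem_map_of_mem mk (hwmem (y i))
            rwa [MonoidHom.map_closure] at hmem2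
        have h2 : Subgroup.closure ((mk : G →* G ⧸ N) '' Set.range y) = ⊤ := by
          rw [← MonoidHom.map_closure, hygen]
          exact Subgroup.map_top_of_surjective mk (QuotientGroup.mk'_surjective N)
        intro a
        exact h1 (h2 ▸ Subgroup.mem_top a)
      have hkey : ∀ a b : G ⧸ N, Commute a b := fun a b =>
        commute_closure hcomm (hsub a) (hsub b)
      rw [_root_.commutator_def, Subgroup.commutator_le]
      intro g1 _ g2 _
      have h1 : mk ⁅g1, g2⁆ = 1 := by
        rw [map_commutatorElement]
        exact commutatorElement_eq_one_iff_commute.mpr (hkey _ _)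
      exact (QuotientGroup.eq_one_iff _).mp h1
end

section
/- Let G and G' be groups such that G' is a quotient of G by the normal closure of a single element g ∈ [G,G] (i.e., G' = G/⟪g⟫ with g in the commutator subgroup). If [G,G] is normally generated by k elements, then [G',G'] is normally generated by k elements; conversely if [G',G'] is normally generated by k elements, then [G,G] is normally generated by k+1 elements. -/
open Subgroup QuotientGroup

lemma normalClosure_insert_one {G : Type*} [Group G] (s : Set G) :
    Subgroup.normalClosure (insert (1:G) s) = Subgroup.normalClosure s := by
  apply le_antisymm
  · apply Subgroup.normalClosure_le_normal
    rintro x (rfl | hx)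
    · exact one_mem _
    · exact Subgroup.subset_normalClosure hx
  · exact Subgroup.normalClosure_mono (Set.subset_insert _ _)

/-- Killing the normal closure of a single element `g ∈ [G,G]` decreases the Ma-Qiu index
by at most... : if `[G,G]` is normally generated by `k` elements then so is `[G',G']`,
and conversely `[G,G]` is normally generated by `k+1` elements whenever `[G',G']` is
normally generated by `k` elements, where `G' = G/⟪g⟫`. -/
theorem MaQiu_single_relator_quotient (G : Type*) [Group G] (g : G)
    (hg : g ∈ commutator G) (k : ℕ) :
    ((∃ T : Finset G, T.card = k ∧ Subgroup.normalClosure (T : Set G) = commutator G) →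
      ∃ T' : Finset (G ⧸ Subgroup.normalClosure {g}), T'.card ≤ k ∧
        Subgroup.normalClosure (T' : Set _) =
          commutator (G ⧸ Subgroup.normalClosure {g})) ∧
    ((∃ T' : Finset (G ⧸ Subgroup.normalClosure {g}), T'.card = k ∧
        Subgroup.normalClosure (T' : Set _) =
          commutator (G ⧸ Subgroup.normalClosure {g})) →
      ∃ T : Finset G, T.card ≤ k + 1 ∧
        Subgroup.normalClosure (T : Set G) = commutator G) := by
  classical
  set N := Subgroup.normalClosure ({g} : Set G) with hN
  have hNle : N ≤ commutator G :=
    Subgroup.normalClosure_le_normal (by simpa using hg)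
  let π : G →* G ⧸ N := QuotientGroup.mk' N
  have hπ : Function.Surjective π := QuotientGroup.mk'_surjective N
  have hker : π.ker = N := QuotientGroup.ker_mk' N
  have hcomm : Subgroup.map π (commutator G) = commutator (G ⧸ N) := by
    rw [commutator_def, commutator_def, Subgroup.map_commutator,
      Subgroup.map_top_of_surjective π hπ]
  constructor
  · rintro ⟨T, hTcard, hT⟩
    refine ⟨T.image π, (Finset.card_image_le).trans hTcard.le, ?_⟩
    rw [Finset.coe_image, ← Subgroup.map_normalClosure _ _ hπ, hT, hcomm]
  · rintro ⟨T', hT'card, hT'⟩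
    set S : Finset G := insert g (T'.image Quotient.out) with hS
    have hπout : ∀ y : G ⧸ N, π y.out = y := fun y => QuotientGroup.out_eq' y
    have hπg : π g = 1 := (QuotientGroup.eq_one_iff g).mpr (Subgroup.subset_normalClosure rfl)
    refine ⟨S, ?_, ?_⟩
    · calc S.card ≤ (T'.image Quotient.out).card + 1 := Finset.card_insert_le _ _
        _ ≤ k + 1 := Nat.add_le_add_right ((Finset.card_image_le).trans hT'card.le) 1
    · have hgN : N ≤ Subgroup.normalClosure (S : Set G) :=
        Subgroup.normalClosure_le_normal (by
          simpa using Subgroup.subset_normalClosure (by simp [hS] : g ∈ (S : Set G)))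
      have himg : π '' (S : Set G) = insert (1 : G ⧸ N) (T' : Set _) := by
        simp only [hS, Finset.coe_insert, Set.image_insert_eq, hπg, Finset.coe_image,
          ← Set.image_comp]
        congr 1
        ext x
        constructor
        · rintro ⟨y, hy, rfl⟩; simpa [hπout] using hy
        · intro hx; exact ⟨x, hx, hπout x⟩
      have hmap : Subgroup.map π (Subgroup.normalClosure (S : Set G))
          = commutator (G ⧸ N) := by
        rw [Subgroup.map_normalClosure _ _ hπ, himg, normalClosure_insert_one, hT']
      have hself : Subgroup.comap π (Subgroup.map π (Subgroup.normalClosure (S : Set G)))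
          = Subgroup.normalClosure (S : Set G) :=
        Subgroup.comap_map_eq_self (by rw [hker]; exact hgN)
      have : commutator G ≤ Subgroup.normalClosure (S : Set G) := by
        calc commutator G ≤ Subgroup.comap π (Subgroup.map π (commutator G)) :=
              Subgroup.le_comap_map _ _
          _ = Subgroup.normalClosure (S : Set G) := by rw [hcomm, ← hmap, hself]
      refine le_antisymm ?_ this
      apply Subgroup.normalClosure_le_normal
      intro x hx
      simp only [hS, Finset.coe_insert, Set.mem_insert_iff, Finset.coe_image,
        Set.mem_image, Finset.mem_coe] at hx
      rcases hx with rfl | ⟨y, hy, rfl⟩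
      · exact hg
      · have h1 : π y.out ∈ commutator (G ⧸ N) := by
          rw [← hT', hπout]; exact Subgroup.subset_normalClosure hy
        rw [← hcomm] at h1
        obtain ⟨z, hz, hzz⟩ := h1
        have h2 : z⁻¹ * y.out ∈ π.ker := by simp [MonoidHom.mem_ker, hzz]
        rw [hker] at h2
        simpa using mul_mem hz (hNle h2)
end
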